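/- If x is the increasing rearrangement of a finite sequence x' and the partial sums of x' (in the original order) are dominated by the partial sums of a nondecreasing sequence y, then the partial sums of the increasing rearrangement x are also dominated by the partial sums of y: x₁ + ⋯ + xₖ ≤ y₁ + ⋯ + yₖ for all k. -/

import Mathlib

/-!
Among `k`-element sets of indices of a sorted sequence, the initial segment `range k` has the
smallest sum: the indices it has outside a set `T` all lie below those that `T` has outside it,
and there are equally many of each. The first `k` terms of `x'` are the terms of `x` indexed by
such a set `T`, namely the preimage of `range k` under the sorting permutation.
-/

open Finset

theorem Finset.sum_le_sum_of_card_eq_of_forall_le {ι M : Type*} [AddCommMonoid M] [LinearOrder M]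
    [IsOrderedAddMonoid M] {s t : Finset ι} {f : ι → M} (hcard : #s = #t)
    (h : ∀ a ∈ s, ∀ b ∈ t, f a ≤ f b) : ∑ a ∈ s, f a ≤ ∑ b ∈ t, f b := by
  rcases s.eq_empty_or_nonempty with rfl | hs
  · rw [eq_comm, card_empty, card_eq_zero] at hcard
    simp [hcard]
  calc ∑ a ∈ s, f a ≤ #s • s.sup' hs f := sum_le_card_nsmul _ _ _ fun a ha => le_sup' f ha
    _ = #t • s.sup' hs f := by rw [hcard]
    _ ≤ ∑ b ∈ t, f b := card_nsmul_le_sum _ _ _ fun b hb => sup'_le hs f fun a ha => h a ha b hb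

theorem MonotoneOn.sum_range_le_sum_of_subset {M : Type*} [AddCommMonoid M] [LinearOrder M]
    [IsOrderedAddMonoid M] {x : ℕ → M} {n : ℕ} (hx : MonotoneOn x (Set.Iio n)) {T : Finset ℕ}
    (hT : T ⊆ range n) : ∑ i ∈ range #T, x i ≤ ∑ i ∈ T, x i := by
  rw [← sum_inter_add_sum_sdiff (range #T) T, ← sum_inter_add_sum_sdiff T (range #T), inter_comm]
  refine add_le_add le_rfl (sum_le_sum_of_card_eq_of_forall_le ?_ ?_)
  · exact card_sdiff_eq_card_sdiff_iff.mpr (card_range _)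
  · intro a ha b hb
    simp only [mem_sdiff, mem_range, not_lt] at ha hb
    have hbn : b < n := mem_range.mp (hT hb.1)
    have hab : a < b := ha.1.trans_le hb.2
    exact hx (hab.trans hbn) hbn hab.le

theorem sorted_partial_sums_dominated (n : ℕ) (x' x y : ℕ → ℝ)
    (σ : Equiv.Perm ℕ) (hσ : ∀ i, i < n → σ i < n)
    (hperm : ∀ i, i < n → x i = x' (σ i))
    (hxmono : ∀ i, i + 1 < n → x i ≤ x (i + 1))
    (hsum : ∀ k, k ≤ n → ∑ i ∈ Finset.range k, x' i ≤ ∑ i ∈ Finset.range k, y i) :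
    ∀ k, k ≤ n → ∑ i ∈ Finset.range k, x i ≤ ∑ i ∈ Finset.range k, y i := by
  intro k hk
  have hx : MonotoneOn x (Set.Iio n) :=
    monotoneOn_of_le_succ Set.ordConnected_Iio fun i _ _ hi => by
      rw [Order.succ_eq_add_one] at hi ⊢
      exact hxmono i hi
  have hσsymm : Set.MapsTo σ.symm (Set.Iio n) (Set.Iio n) := σ.perm_symm_mapsTo_of_mapsTo hσ
  set T := (range k).map σ.symm.toEmbedding
  have hT : T ⊆ range n := fun j hj => by
    obtain ⟨i, hi, rfl⟩ := mem_map.mp hj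
    exact mem_range.mpr (hσsymm (mem_range.mp hi |>.trans_le hk))
  calc ∑ i ∈ range k, x i = ∑ i ∈ range #T, x i := by rw [card_map, card_range]
    _ ≤ ∑ i ∈ T, x i := hx.sum_range_le_sum_of_subset hT
    _ = ∑ i ∈ range k, x' i := by
      refine sum_map _ _ _ |>.trans <| sum_congr rfl fun i hi => ?_
      rw [Equiv.coe_toEmbedding, hperm _ (hσsymm (mem_range.mp hi |>.trans_le hk)),
        Equiv.apply_symm_apply]
    _ ≤ ∑ i ∈ range k, y i := hsum k hk
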